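/- arXiv:0710.1254 — 3 statements merged into one kernel-verified Lean document; each statement's English description precedes it below -/
import Mathlib

section
/- (Subgroup Approximation Theorem.) Let (Ω, p) be a finite probability space and let s₁, …, s_n be setoids on Ω. For every ε > 0 there exist N ≥ 1 and subgroups H₁, …, H_n of Equiv.Perm (Fin N) such that for every nonempty subset α ⊆ {1, …, n}: | H_p(⨅_{i∈α} s_i) − (1/N)·log( N! / |⨅_{i∈α} H_i| ) | < ε and | H_p(⨆_{i∈α} s_i) − (1/N)·log( N! / |⨆_{i∈α} H_i| ) | < ε. -/
open Classical in
/-- Probability of the equivalence class `c` of the setoid `s`. -/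
noncomputable def classProb {Ω : Type*} [Fintype Ω] (p : Ω → ℝ) (s : Setoid Ω)
    (c : Quotient s) : ℝ :=
  ∑ ω ∈ Finset.univ.filter (fun ω => (⟦ω⟧ : Quotient s) = c), p ω

open Classical in
/-- Shannon entropy of the partition induced by the setoid `s`
(with the convention `0 · log 0 = 0`). -/
noncomputable def entropy {Ω : Type*} [Fintype Ω] (p : Ω → ℝ) (s : Setoid Ω) : ℝ :=
  -∑ c : Quotient s, classProb p s c * Real.log (classProb p s c)

/-!
Approximate `p` by the empirical distributions of surjections `f : Fin N → Ω` (weights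
`m ω / N` with every `m ω ≥ 1`), and let `H i` be the stabilizer in `Perm (Fin N)` of the
partition pulled back from `s i` along `f`. Pulling back along a surjection and taking stabilizers
both commute with `⨅` and `⨆` (for `⨆` because the stabilizer of a partition is generated by the
transpositions inside its blocks), so `⨅`/`⨆` of the `H i` is the stabilizer of the pulled-back
`⨅`/`⨆` of the `s i`. The index of the stabilizer of a partition with block sizes `n c` is the
multinomial coefficient `N! / ∏ (n c)!`, whose normalized logarithm is the entropy of `n / N` up
to `O(log N / N)` by Stirling-type bounds on `log n!`. Letting `N → ∞` and using continuity of
entropy gives the theorem.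
-/

open Equiv Function Filter Topology Real
open scoped Nat

namespace Setoid

variable {X Y : Type*}

def stabilizer (t : Setoid X) : Subgroup (Perm X) where
  carrier := {σ | ∀ x, t (σ x) x}
  one_mem' := t.refl
  mul_mem' {σ τ} hσ hτ x := t.trans (hσ (τ x)) (hτ x)
  inv_mem' {σ} hσ x := t.symm (by simpa using hσ (σ⁻¹ x))

theorem mem_stabilizer {t : Setoid X} {σ : Perm X} : σ ∈ t.stabilizer ↔ ∀ x, t (σ x) x :=
  Iff.rfl

theorem iInf_rel {ι : Sort*} (t : ι → Setoid X) (x y : X) :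
    (⨅ i, t i) x y ↔ ∀ i, t i x y :=
  Set.forall_mem_range

theorem stabilizer_iInf {ι : Sort*} (t : ι → Setoid X) :
    (⨅ i, t i).stabilizer = ⨅ i, (t i).stabilizer := by
  ext σ
  simp only [Subgroup.mem_iInf, mem_stabilizer, iInf_rel]
  exact forall_comm

theorem swap_mem_stabilizer [DecidableEq X] {t : Setoid X} {a b : X} (h : t a b) :
    swap a b ∈ t.stabilizer := by
  intro x
  rcases eq_or_ne x a with rfl | hxa
  · simpa using t.symm h
  rcases eq_or_ne x b with rfl | hxb
  · simpa using h
  · rw [swap_apply_of_ne_of_ne hxa hxb]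

theorem card_stabilizer_ker [Fintype X] [DecidableEq X] [Fintype Y] [DecidableEq Y]
    (g : X → Y) : Nat.card (ker g).stabilizer = ∏ y, (Fintype.card {x // g x = y})! := by
  rw [← DomMulAct.stabilizer_card, ← Nat.card_eq_fintype_card]
  exact Nat.card_congr <| subtypeEquivRight fun σ => by
    simp only [mem_stabilizer, ker_def, funext_iff, comp_apply]

theorem comap_iInf {ι : Sort*} (f : X → Y) (s : ι → Setoid Y) :
    comap f (⨅ i, s i) = ⨅ i, comap f (s i) :=
  Setoid.ext fun x y => by simp only [comap_rel, iInf_rel]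

theorem comap_iSup {ι : Sort*} [Nonempty ι] {f : X → Y} (hf : Surjective f)
    (s : ι → Setoid Y) : comap f (⨆ i, s i) = ⨆ i, comap f (s i) := by
  set K := ⨆ i, comap f (s i)
  have hker : ker f ≤ K := le_iSup_of_le (Classical.arbitrary ι) fun x y (h : f x = f y) =>
    (comap_rel f _ x y).2 (h ▸ (s _).refl _)
  refine le_antisymm ?_ (iSup_le fun i x y h => (le_iSup s i) h)
  suffices h : ⨆ i, s i ≤ K.map f by
    rw [← comap_map_of_ker_le f K hker]; exact fun x y hxy => h hxy
  refine iSup_le fun i a b hab => ?_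
  obtain ⟨x, rfl⟩ := hf a
  obtain ⟨y, rfl⟩ := hf b
  exact le_comap_map (le_iSup (fun i => comap f (s i)) i hab)

theorem comap_biSup {ι : Type*} {p : ι → Prop} (hp : ∃ i, p i) {f : X → Y} (hf : Surjective f)
    (s : ι → Setoid Y) :
    comap f (⨆ (i) (_ : p i), s i) = ⨆ (i) (_ : p i), comap f (s i) := by
  have : Nonempty {i // p i} := nonempty_subtype.2 hp
  simpa only [iSup_subtype'] using comap_iSup hf fun i : {i // p i} => s i

end Setoid

def Subgroup.swapSetoid {X : Type*} [DecidableEq X] (K : Subgroup (Perm X)) : Setoid X where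
  r a b := swap a b ∈ K
  iseqv :=
    { refl a := by rw [swap_self]; exact K.one_mem
      symm {a b} h := by rwa [swap_comm]
      trans := SubmonoidClass.swap_mem_trans K }

namespace Setoid

variable {X Y ι : Type*}

theorem stabilizer_le_of_swap_mem [Finite X] [DecidableEq X] {t : Setoid X}
    {K : Subgroup (Perm X)} (h : ∀ a b, t a b → swap a b ∈ K) : t.stabilizer ≤ K := by
  intro σ hσ
  set S : Set (Perm X) := {τ | τ.IsSwap ∧ τ ∈ K}
  have hS : ∀ τ ∈ S, τ.IsSwap := fun τ hτ => hτ.1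
  refine Subgroup.closure_le K |>.2 (fun τ hτ => hτ.2) <|
    (mem_closure_isSwap hS).2 ⟨Set.toFinite _, fun x => (swap_mem_closure_isSwap hS).1 ?_⟩
  rcases eq_or_ne (σ x) x with hx | hx
  · rw [hx, swap_self]; exact Subgroup.one_mem _
  · exact Subgroup.subset_closure ⟨⟨σ x, x, hx, rfl⟩, h _ _ (hσ x)⟩

theorem gc_stabilizer_swapSetoid (X : Type*) [Finite X] [DecidableEq X] :
    GaloisConnection (stabilizer : Setoid X → Subgroup (Perm X)) Subgroup.swapSetoid :=
  fun _ _ => ⟨fun h _ _ hab => h (swap_mem_stabilizer hab), stabilizer_le_of_swap_mem⟩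

theorem stabilizer_comap_biInf (f : X → Y) (p : ι → Prop) (s : ι → Setoid Y) :
    (comap f (⨅ (i) (_ : p i), s i)).stabilizer = ⨅ (i) (_ : p i), (comap f (s i)).stabilizer := by
  simp only [comap_iInf, stabilizer_iInf]

theorem stabilizer_comap_biSup [Finite X] [DecidableEq X] {p : ι → Prop} (hp : ∃ i, p i)
    {f : X → Y} (hf : Surjective f) (s : ι → Setoid Y) :
    (comap f (⨆ (i) (_ : p i), s i)).stabilizer = ⨆ (i) (_ : p i), (comap f (s i)).stabilizer := by
  rw [comap_biSup hp hf, (gc_stabilizer_swapSetoid X).l_iSup₂]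

end Setoid

theorem Real.natCast_mul_log_sub_le_log_factorial (n : ℕ) : n * log n - n ≤ log n ! := by
  rcases Nat.eq_zero_or_pos n with rfl | hn
  · simp
  have h := log_le_log (by positivity) (pow_div_factorial_le_exp _ (Nat.cast_nonneg n) n)
  rw [log_div (by positivity) (by positivity), log_pow, log_exp] at h
  linarith

theorem Real.log_factorial_le (n : ℕ) : log n ! ≤ n * log n - n + 1 + log n := by
  rcases Nat.eq_zero_or_pos n with rfl | hn
  · simp
  obtain ⟨k, rfl⟩ := Nat.exists_eq_add_of_le' hn
  -- `n! / (√(2n) (n/e)^n)` decreases from its value `e / √2` at `n = 1`.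
  have h := Stirling.log_stirlingSeq'_antitone (Nat.zero_le k)
  simp only [comp_apply, Stirling.log_stirlingSeq_formula] at h
  have hk : (0 : ℝ) < (k + 1 : ℕ) := by positivity
  rw [log_mul two_ne_zero hk.ne', log_div hk.ne' (exp_pos 1).ne', log_exp] at h
  have := log_nonneg (show (1 : ℝ) ≤ (k + 1 : ℕ) by simp)
  norm_num at h this ⊢
  nlinarith

open Finset in
theorem abs_log_multinomial_div_sub_entropy_le {C : Type*} [Fintype C] (n : C → ℕ) {N : ℕ}
    (hsum : ∑ c, n c = N) (hN : N ≠ 0) :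
    |1 / (N : ℝ) * log (N ! / ∏ c, ((n c)! : ℝ)) - -∑ c, (n c / N : ℝ) * log (n c / N)|
      ≤ (Fintype.card C + 1) * (1 + log N) / N := by
  have hN' : (0 : ℝ) < N := by positivity
  have hlogN : 0 ≤ log N := log_natCast_nonneg N
  have hsumR : ∑ c, (n c : ℝ) = N := by exact_mod_cast hsum
  have hlog_le : ∀ c, log (n c) ≤ log N := fun c => by
    rcases eq_or_ne (n c) 0 with h | h
    · simpa [h] using hlogN
    · have : n c ≤ N := hsum ▸ single_le_sum (fun c _ => Nat.zero_le (n c)) (mem_univ c)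
      exact log_le_log (by positivity) (by exact_mod_cast this)
  have hent : N * -∑ c, (n c / N : ℝ) * log (n c / N) = N * log N - ∑ c, n c * log (n c) := by
    have h : ∀ c, N * ((n c / N : ℝ) * log (n c / N)) = n c * log (n c) - n c * log N := by
      intro c
      rcases eq_or_ne (n c) 0 with h | h
      · simp [h]
      · rw [log_div (by positivity) hN'.ne']; field_simp
    rw [mul_neg, mul_sum, sum_congr rfl fun c _ => h c, sum_sub_distrib, ← sum_mul, hsumR]
    ring
  have hlog : log (N ! / ∏ c, ((n c)! : ℝ)) = log N ! - ∑ c, log (n c)! := by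
    rw [log_div (by positivity) (by positivity), log_prod fun c _ => by positivity]
  have hupper : log N ! - ∑ c, log (n c)! ≤ N * log N - ∑ c, n c * log (n c) + (1 + log N) := by
    have h := sum_le_sum fun c (_ : c ∈ univ) => natCast_mul_log_sub_le_log_factorial (n c)
    rw [sum_sub_distrib, hsumR] at h
    linarith [log_factorial_le N]
  have hlower : N * log N - ∑ c, n c * log (n c) - Fintype.card C * (1 + log N)
      ≤ log N ! - ∑ c, log (n c)! := by
    have h := sum_le_sum fun c (_ : c ∈ univ) => (log_factorial_le (n c)).trans
      (by linarith [hlog_le c] : _ ≤ n c * log (n c) - n c + (1 + log N))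
    rw [sum_add_distrib, sum_sub_distrib, hsumR, sum_const, card_univ, nsmul_eq_mul] at h
    linarith [natCast_mul_log_sub_le_log_factorial N]
  have hC : 0 ≤ (Fintype.card C : ℝ) * (1 + log N) := by positivity
  rw [hlog, show ∀ a b : ℝ, 1 / N * a - b = (a - N * b) / N by intros; field_simp, abs_div,
    abs_of_pos hN', div_le_div_iff_of_pos_right hN', hent, abs_le]
  constructor <;> linarith

open Classical in
noncomputable def empiricalDist {X Ω : Type*} [Fintype X] (f : X → Ω) (ω : Ω) : ℝ :=
  Fintype.card {x // f x = ω} / Fintype.card X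

section empiricalDist

variable {X Ω : Type*} [Fintype X]

theorem empiricalDist_comp_equiv {Y : Type*} [Fintype Y] (f : X → Ω)
    (e : Y ≃ X) : empiricalDist (f ∘ e) = empiricalDist f := by
  classical
  ext ω
  simp only [empiricalDist, Fintype.card_congr e]
  congr 2
  exact Fintype.card_congr (e.subtypeEquiv fun _ => Iff.rfl)

theorem empiricalDist_sigma_fst [Fintype Ω] (m : Ω → ℕ) (ω : Ω) :
    empiricalDist (Sigma.fst : (Σ ω, Fin (m ω)) → Ω) ω = m ω / ∑ ω, m ω := by
  classical
  simp [empiricalDist, Fintype.card_congr (sigmaSubtype ω)]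

open Classical in
theorem classProb_empiricalDist [Fintype Ω] (f : X → Ω) (s : Setoid Ω) (c : Quotient s) :
    classProb (empiricalDist f) s c =
      Fintype.card {x // (⟦f x⟧ : Quotient s) = c} / Fintype.card X := by
  simp only [classProb, empiricalDist, ← Finset.sum_div, Fintype.card_subtype]
  rw [← Nat.cast_sum]
  congr 2
  convert Finset.sum_card_fiberwise_eq_card_filter Finset.univ
    (Finset.univ.filter fun ω => (⟦ω⟧ : Quotient s) = c) f using 2
  simp

theorem abs_entropy_empiricalDist_sub_le [Fintype Ω] [Nonempty X] (f : X → Ω) (s : Setoid Ω) :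
    |entropy (empiricalDist f) s - 1 / (Fintype.card X : ℝ) *
        log ((Fintype.card X)! / Nat.card (s.comap f).stabilizer)|
      ≤ (Fintype.card Ω + 1) * (1 + log (Fintype.card X)) / Fintype.card X := by
  classical
  set g : X → Quotient s := fun x => ⟦f x⟧
  have hsum : ∑ c, Fintype.card {x // g x = c} = Fintype.card X := by
    rw [← Fintype.card_sigma]; exact Fintype.card_congr (sigmaFiberEquiv g)
  have h := abs_log_multinomial_div_sub_entropy_le _ hsum Fintype.card_ne_zero
  rw [Setoid.comap_eq, Setoid.card_stabilizer_ker, entropy, abs_sub_comm]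
  simp only [classProb_empiricalDist]
  push_cast
  refine h.trans ?_
  gcongr
  exact_mod_cast Fintype.card_quotient_le s

end empiricalDist

theorem continuous_entropy {Ω : Type*} [Fintype Ω] (s : Setoid Ω) :
    Continuous fun p : Ω → ℝ => entropy p s :=
  (continuous_finsetSum _ fun _ _ => continuous_mul_log.comp <|
    continuous_finsetSum _ fun ω _ => continuous_apply ω).neg

theorem tendsto_one_add_log_div_atTop : Tendsto (fun x : ℝ => (1 + log x) / x) atTop (𝓝 0) := by
  simpa [add_div] using tendsto_inv_atTop_zero.add isLittleO_log_id_atTop.tendsto_div_nhds_zero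

theorem exists_surjective_tendsto_empiricalDist {Ω : Type*} [Fintype Ω] (p : Ω → ℝ)
    (hp : ∀ ω, 0 ≤ p ω) (hsum : ∑ ω, p ω = 1) :
    ∃ (N : ℕ → ℕ) (f : ∀ M, Fin (N M) → Ω), (∀ M, Surjective (f M)) ∧ Tendsto N atTop atTop ∧
      Tendsto (fun M => empiricalDist (f M)) atTop (𝓝 p) := by
  set m : ℕ → Ω → ℕ := fun M ω => ⌊p ω * M⌋₊ + 1
  have hm : ∀ ω, Tendsto (fun M : ℕ => (m M ω : ℝ) / M) atTop (𝓝 (p ω)) := fun ω => by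
    simpa [m, add_div] using ((tendsto_nat_floor_mul_div_atTop (hp ω)).comp
      tendsto_natCast_atTop_atTop).add tendsto_one_div_atTop_nhds_zero_nat
  have hM : ∀ M : ℕ, (M : ℝ) ≤ ∑ ω, (m M ω : ℝ) := fun M => by
    calc (M : ℝ) = ∑ ω, p ω * M := by rw [← Finset.sum_mul, hsum, one_mul]
      _ ≤ ∑ ω, (m M ω : ℝ) := Finset.sum_le_sum fun ω _ => by
        simpa [m] using (Nat.lt_floor_add_one (p ω * M)).le
  refine ⟨fun M => Fintype.card (Σ ω, Fin (m M ω)),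
    fun M => Sigma.fst ∘ (Fintype.equivFin _).symm, fun M ω => ?_, ?_, ?_⟩
  · exact ⟨Fintype.equivFin _ ⟨ω, 0, Nat.succ_pos _⟩, by simp⟩
  · refine tendsto_atTop_mono (fun M => ?_) tendsto_id
    simpa using (by exact_mod_cast hM M : M ≤ ∑ ω, m M ω)
  · rw [tendsto_pi_nhds]
    intro ω
    simp only [empiricalDist_comp_equiv, empiricalDist_sigma_fst]
    have htot : Tendsto (fun M : ℕ => (∑ ω, (m M ω : ℝ)) / M) atTop (𝓝 1) := by
      simpa [Finset.sum_div, hsum] using tendsto_finsetSum Finset.univ fun ω _ => hm ω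
    rw [← div_one (p ω)]
    refine ((hm ω).div htot one_ne_zero).congr' ?_
    filter_upwards [eventually_ne_atTop 0] with M hM0
    push_cast
    exact div_div_div_cancel_right₀ (by exact_mod_cast hM0) _ _

/-- Subgroup Approximation Theorem: the entropies of all joint and common
information elements generated by `s₁, …, s_n` are simultaneously approximated,
within `ε`, by the normalized log-indices of the corresponding generated
subgroups of a symmetric group `Equiv.Perm (Fin N)`. -/
theorem stmt_11 {Ω : Type*} [Fintype Ω] (p : Ω → ℝ) (hp : ∀ ω, 0 ≤ p ω)
    (hsum : ∑ ω, p ω = 1) (n : ℕ) (s : Fin n → Setoid Ω) :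
    ∀ ε : ℝ, 0 < ε →
      ∃ N : ℕ, 1 ≤ N ∧ ∃ H : Fin n → Subgroup (Equiv.Perm (Fin N)),
        ∀ α : Finset (Fin n), α.Nonempty →
          |entropy p (⨅ i ∈ α, s i) -
              (1 / (N : ℝ)) *
                Real.log ((Nat.factorial N : ℝ) / (Nat.card ↥(⨅ i ∈ α, H i) : ℝ))| < ε ∧
          |entropy p (⨆ i ∈ α, s i) -
              (1 / (N : ℝ)) *
                Real.log ((Nat.factorial N : ℝ) / (Nat.card ↥(⨆ i ∈ α, H i) : ℝ))| < ε := by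
  intro ε hε
  obtain ⟨N, f, hf, hN, hemp⟩ := exists_surjective_tendsto_empiricalDist p hp hsum
  have hent (t : Setoid Ω) :
      ∀ᶠ M in atTop, |entropy (empiricalDist (f M)) t - entropy p t| < ε / 2 :=
    (((continuous_entropy t).tendsto p).comp hemp).eventually
      (eventually_abs_sub_lt _ (half_pos hε))
  have herr : ∀ᶠ M in atTop, (Fintype.card Ω + 1) * (1 + log (N M)) / N M < ε / 2 := by
    have h := (tendsto_one_add_log_div_atTop.comp (tendsto_natCast_atTop_atTop.comp hN)).const_mul
      ((Fintype.card Ω : ℝ) + 1)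
    simp only [mul_zero] at h
    simpa only [mul_div_assoc, comp_apply] using h.eventually (gt_mem_nhds (half_pos hε))
  obtain ⟨M, hinf, hsup, hεM, hM⟩ :=
    ((eventually_all.2 fun α : Finset (Fin n) => hent (⨅ i ∈ α, s i)).and
      ((eventually_all.2 fun α : Finset (Fin n) => hent (⨆ i ∈ α, s i)).and
        (herr.and (hN.eventually_ge_atTop 1)))).exists
  have : Nonempty (Fin (N M)) := ⟨⟨0, hM⟩⟩
  have approx (t : Setoid Ω) (ht : |entropy (empiricalDist (f M)) t - entropy p t| < ε / 2) :
      |entropy p t - 1 / (N M : ℝ) * log ((N M)! / Nat.card (t.comap (f M)).stabilizer)| < ε := by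
    have h := abs_entropy_empiricalDist_sub_le (f M) t
    rw [Fintype.card_fin] at h
    refine (abs_sub_le _ (entropy (empiricalDist (f M)) t) _).trans_lt ?_
    linarith [abs_sub_comm (entropy p t) (entropy (empiricalDist (f M)) t)]
  refine ⟨N M, hM, fun i => (Setoid.comap (f M) (s i)).stabilizer, fun α hα => ?_⟩
  rw [← Setoid.stabilizer_comap_biInf, ← Setoid.stabilizer_comap_biSup hα (hf M)]
  exact ⟨approx _ (hinf α), approx _ (hsup α)⟩
end

section
/- Common information does not obey the supermodularity law: there exist a finite probability space (Ω, p) and setoids s₁, s₂, s₃ on Ω such that H_p(s₁ ⊔ s₂) + H_p(s₂ ⊔ s₃) > H_p(s₁ ⊔ s₂ ⊔ s₃) + H_p(s₂). -/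
/-! Take the uniform measure on `Fin 3`, let `s₂ = ⊥` be the discrete partition and let
`s₁ = {{0}, {1, 2}}`, `s₃ = {{0, 1}, {2}}`. Then `s₁ ⊔ s₂ = s₁`, `s₂ ⊔ s₃ = s₃` and
`s₁ ⊔ s₃ = ⊤`, so the inequality reads `2 h(1/3) > log 3 + 0`, i.e. the mutual information
`H(s₁) + H(s₃) - H(⊥)` of `s₁` and `s₃` is positive although their common information vanishes.
Numerically this is `27 > 16`. -/

open Real Finset

section

variable {Ω : Type*} [Fintype Ω] (p : Ω → ℝ)

theorem entropy_eq_sum_negMulLog (s : Setoid Ω) [Fintype (Quotient s)] :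
    entropy p s = ∑ c, negMulLog (classProb p s c) := by
  simp only [entropy, negMulLog, neg_mul, sum_neg_distrib]
  congr!

theorem classProb_ker_mk {β : Type*} [DecidableEq β] (f : Ω → β) (ω : Ω) :
    classProb p (Setoid.ker f) ⟦ω⟧ = ∑ ω' ∈ univ.filter (f · = f ω), p ω' := by
  simp only [classProb, Quotient.eq, Setoid.ker_def]

theorem entropy_ker {β : Type*} [Fintype β] [DecidableEq β] (f : Ω → β) :
    entropy p (Setoid.ker f) = ∑ b, negMulLog (∑ ω ∈ univ.filter (f · = b), p ω) := by
  rw [entropy_eq_sum_negMulLog]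
  refine Fintype.sum_of_injective (Setoid.kerLift f) (Setoid.kerLift_injective f) _
    (fun b => negMulLog (∑ ω ∈ univ.filter (f · = b), p ω)) ?_ ?_
  · intro b hb
    rw [filter_false_of_mem fun ω _ (hω : f ω = b) => hb ⟨⟦ω⟧, hω⟩, sum_empty, negMulLog_zero]
  · exact Quotient.ind fun ω => congrArg negMulLog (classProb_ker_mk p f ω)

theorem entropy_ker_bool (hp : ∑ ω, p ω = 1) (f : Ω → Bool) :
    entropy p (Setoid.ker f) = binEntropy (∑ ω ∈ univ.filter (f · = true), p ω) := by
  rw [entropy_ker, Fintype.sum_bool, binEntropy_eq_negMulLog_add_negMulLog_one_sub, ← hp,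
    ← sum_filter_add_sum_filter_not univ (f · = true)]
  simp

theorem entropy_bot : entropy p ⊥ = ∑ ω, negMulLog (p ω) := by
  classical
  rw [← Setoid.ker_eq_bot_iff.2 Function.injective_id, entropy_ker]
  simp [sum_filter]

theorem entropy_bot_uniform :
    entropy (fun _ : Ω => (Fintype.card Ω : ℝ)⁻¹) ⊥ = log (Fintype.card Ω) := by
  rw [entropy_bot, sum_const, card_univ, nsmul_eq_mul, negMulLog, log_inv]
  rcases eq_or_ne (Fintype.card Ω : ℝ) 0 with h | h
  · simp [h]
  · field_simp

theorem entropy_top (hp : ∑ ω, p ω = 1) : entropy p ⊤ = 0 := by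
  rw [← (Setoid.eq_top_iff (s := Setoid.ker fun _ : Ω => ())).2 fun _ _ => rfl, entropy_ker]
  simp [hp]

end

theorem Setoid.sup_eq_top_of_forall_rel {α : Type*} {s t : Setoid α} (z : α)
    (h : ∀ x, s x z ∨ t x z) : s ⊔ t = ⊤ := by
  have hz : ∀ x, (s ⊔ t) x z := fun x =>
    (h x).elim (fun hs => le_sup_left (b := t) hs) (fun ht => le_sup_right (a := s) ht)
  exact Setoid.eq_top_iff.2 fun x y => Setoid.trans' _ (hz x) (Setoid.symm' _ (hz y))

theorem log_three_lt_two_mul_binEntropy_inv_three : log 3 < 2 * binEntropy 3⁻¹ := by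
  have h16 : log 16 = 4 * log 2 := by
    rw [show (16 : ℝ) = 2 ^ 4 by norm_num, log_pow]; norm_num
  have h27 : log 27 = 3 * log 3 := by
    rw [show (27 : ℝ) = 3 ^ 3 by norm_num, log_pow]; norm_num
  have h : log 16 < log 27 := log_lt_log (by norm_num) (by norm_num)
  have h23 : log (1 - 3⁻¹) = log 2 - log 3 := by
    rw [show (1 : ℝ) - 3⁻¹ = 2 / 3 by norm_num, log_div (by norm_num) (by norm_num)]
  rw [binEntropy, inv_inv, log_inv (1 - 3⁻¹), h23]
  linarith

/-- Common information does not obey the supermodularity law. -/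
theorem stmt_16 :
    ∃ (Ω : Type) (inst : Fintype Ω) (p : Ω → ℝ) (s₁ s₂ s₃ : Setoid Ω),
      (∀ ω, 0 ≤ p ω) ∧ (@Finset.univ Ω inst).sum p = 1 ∧
      @entropy Ω inst p (s₁ ⊔ s₂) + @entropy Ω inst p (s₂ ⊔ s₃) >
        @entropy Ω inst p (s₁ ⊔ s₂ ⊔ s₃) + @entropy Ω inst p s₂ := by
  have hp : ∑ _ω : Fin 3, (3⁻¹ : ℝ) = 1 := by simp
  have h_bot := entropy_bot_uniform (Ω := Fin 3)
  rw [Fintype.card_fin, Nat.cast_ofNat] at h_bot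
  have h_top : Setoid.ker (fun ω : Fin 3 => decide (ω = 0)) ⊔
      Setoid.ker (fun ω => decide (ω = 2)) = ⊤ :=
    Setoid.sup_eq_top_of_forall_rel 1 fun x => by fin_cases x <;> simp [Setoid.ker_def]
  refine ⟨Fin 3, inferInstance, fun _ => 3⁻¹, Setoid.ker fun ω => decide (ω = 0), ⊥,
    Setoid.ker fun ω => decide (ω = 2), fun _ => by norm_num, hp, ?_⟩
  rw [sup_bot_eq, bot_sup_eq, h_top, entropy_ker_bool _ hp, entropy_ker_bool _ hp,
    entropy_top _ hp, h_bot]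
  simp only [decide_eq_true_eq, filter_eq', mem_univ, if_true, sum_singleton]
  linarith [log_three_lt_two_mul_binEntropy_inv_three]
end

section
/- (Gács–Körner.) For any finite probability space (Ω, p) and any setoids s₁, s₂ on Ω, the entropy of the common information is at most the mutual information: H_p(s₁ ⊔ s₂) ≤ H_p(s₁) + H_p(s₂) − H_p(s₁ ⊓ s₂). -/
/-!
Write `P_s(ω)` for the probability of the `s`-class of `ω`, `m = s₁ ⊓ s₂` and `t = s₁ ⊔ s₂`.
Then `H(s₁) + H(s₂) - H(m) - H(t) = -∑ p(ω) log x(ω)` with `x = P_{s₁} P_{s₂} / (P_m P_t)`, so by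
`log x ≤ x - 1` it suffices that `∑ p(ω) x(ω) ≤ 1`. Grouping `ω` by `m`-classes bounds this sum by
`∑_c P(a_c) P(b_c) / P_t(c)`, where `a_c` and `b_c` are the `s₁`- and `s₂`-classes containing `c`.
Since `c ↦ (a_c, b_c)` is injective into pairs lying in a common `t`-class `d`, this is at most
`∑_d ∑_{a, b ⊆ d} P(a) P(b) / P(d) = ∑_d P(d) = 1`.
-/

open Real

lemma sum_mul_log_le_sum_mul_sub_sum {ι : Type*} [Fintype ι] {w x : ι → ℝ}
    (hw : ∀ i, 0 ≤ w i) (hx : ∀ i, w i ≠ 0 → 0 < x i) :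
    ∑ i, w i * log (x i) ≤ ∑ i, w i * x i - ∑ i, w i := by
  rw [← Finset.sum_sub_distrib]
  refine Finset.sum_le_sum fun i _ => ?_
  by_cases hwi : w i = 0
  · simp [hwi]
  · rw [← mul_sub_one]
    exact mul_le_mul_of_nonneg_left (log_le_sub_one_of_pos (hx i hwi)) (hw i)

def Setoid.quotientMapOfLE {Ω : Type*} {s t : Setoid Ω} (h : s ≤ t) : Quotient s → Quotient t :=
  Quotient.lift (fun ω => (⟦ω⟧ : Quotient t)) fun _ _ hab => Quotient.sound (h hab)

local notation "π₁" => Setoid.quotientMapOfLE inf_le_left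
local notation "π₂" => Setoid.quotientMapOfLE inf_le_right

lemma Setoid.injective_quotientMapOfLE_inf {Ω : Type*} (s₁ s₂ : Setoid Ω) :
    Function.Injective fun c : Quotient (s₁ ⊓ s₂) => (π₁ c, π₂ c) := by
  rintro ⟨ω⟩ ⟨ω'⟩ h
  obtain ⟨h₁, h₂⟩ := Prod.mk.inj h
  exact Quotient.sound ⟨Quotient.exact h₁, Quotient.exact h₂⟩

section ClassProb

open Classical

variable {Ω : Type*} [Fintype Ω] {p : Ω → ℝ}

lemma sum_classProb_mul (p : Ω → ℝ) (s : Setoid Ω) (G : Quotient s → ℝ) :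
    ∑ c : Quotient s, classProb p s c * G c = ∑ ω, p ω * G ⟦ω⟧ := by
  rw [← Finset.sum_fiberwise Finset.univ (fun ω => (⟦ω⟧ : Quotient s))]
  refine Finset.sum_congr rfl fun c _ => ?_
  rw [classProb, Finset.sum_mul]
  exact Finset.sum_congr rfl fun ω hω => by rw [(Finset.mem_filter.mp hω).2]

lemma sum_classProb (hsum : ∑ ω, p ω = 1) (s : Setoid Ω) :
    ∑ c : Quotient s, classProb p s c = 1 := by
  simpa [hsum] using sum_classProb_mul p s fun _ => 1

lemma entropy_eq_neg_sum (p : Ω → ℝ) (s : Setoid Ω) :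
    entropy p s = -∑ ω, p ω * log (classProb p s ⟦ω⟧) := by
  rw [entropy, sum_classProb_mul p s fun c => log (classProb p s c)]

lemma classProb_nonneg (hp : ∀ ω, 0 ≤ p ω) (s : Setoid Ω) (c : Quotient s) :
    0 ≤ classProb p s c :=
  Finset.sum_nonneg fun ω _ => hp ω

lemma le_classProb_mk (hp : ∀ ω, 0 ≤ p ω) (s : Setoid Ω) (ω : Ω) :
    p ω ≤ classProb p s ⟦ω⟧ :=
  Finset.single_le_sum (fun ω _ => hp ω) (by simp)

lemma classProb_mk_pos (hp : ∀ ω, 0 ≤ p ω) (s : Setoid Ω) {ω : Ω} (hω : p ω ≠ 0) :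
    0 < classProb p s ⟦ω⟧ :=
  ((hp ω).lt_of_ne' hω).trans_le (le_classProb_mk hp s ω)

lemma sum_classProb_fiber (p : Ω → ℝ) {s t : Setoid Ω} (h : s ≤ t) (d : Quotient t) :
    ∑ c : Quotient s, (if s.quotientMapOfLE h c = d then classProb p s c else 0)
      = classProb p t d := by
  simp only [← mul_boole _ (classProb p s _)]
  rw [sum_classProb_mul, classProb, Finset.sum_filter]
  simp only [mul_boole]
  rfl

lemma sum_classProb_mul_classProb_div_le_one (hp : ∀ ω, 0 ≤ p ω) (hsum : ∑ ω, p ω = 1)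
    {s₁ s₂ t : Setoid Ω} (h₁ : s₁ ≤ t) (h₂ : s₂ ≤ t) :
    ∑ c : Quotient (s₁ ⊓ s₂),
      classProb p s₁ (π₁ c) * classProb p s₂ (π₂ c) / classProb p t (s₁.quotientMapOfLE h₁ (π₁ c))
      ≤ 1 := by
  set F : Quotient s₁ × Quotient s₂ → ℝ := fun ab =>
    if s₂.quotientMapOfLE h₂ ab.2 = s₁.quotientMapOfLE h₁ ab.1 then
      classProb p s₁ ab.1 * classProb p s₂ ab.2 / classProb p t (s₁.quotientMapOfLE h₁ ab.1)
    else 0 with hF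
  have hF_nonneg : ∀ ab, 0 ≤ F ab := fun ab => by
    have := classProb_nonneg hp s₁ ab.1
    have := classProb_nonneg hp s₂ ab.2
    have := classProb_nonneg hp t (s₁.quotientMapOfLE h₁ ab.1)
    simp only [hF]
    split_ifs <;> positivity
  calc _ = ∑ ab ∈ Finset.univ.image fun c : Quotient (s₁ ⊓ s₂) => (π₁ c, π₂ c), F ab := by
        rw [Finset.sum_image fun _ _ _ _ h => Setoid.injective_quotientMapOfLE_inf s₁ s₂ h]
        refine Finset.sum_congr rfl fun c _ => ?_
        induction c using Quotient.inductionOn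
        exact (if_pos rfl).symm
    _ ≤ ∑ ab, F ab := Finset.sum_le_univ_sum_of_nonneg hF_nonneg
    _ = ∑ a, classProb p s₁ a / classProb p t (s₁.quotientMapOfLE h₁ a)
          * ∑ b, if s₂.quotientMapOfLE h₂ b = s₁.quotientMapOfLE h₁ a then classProb p s₂ b else 0 := by
        rw [Fintype.sum_prod_type]
        refine Finset.sum_congr rfl fun a _ => ?_
        rw [Finset.mul_sum]
        refine Finset.sum_congr rfl fun b _ => ?_
        simp only [hF, mul_ite, mul_zero, div_mul_eq_mul_div]
    _ = ∑ a, classProb p s₁ a / classProb p t (s₁.quotientMapOfLE h₁ a)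
          * classProb p t (s₁.quotientMapOfLE h₁ a) := by
        simp only [sum_classProb_fiber]
    _ ≤ ∑ a, classProb p s₁ a := Finset.sum_le_sum fun a _ => by
        rw [div_mul_eq_mul_div, mul_div_assoc]
        exact mul_le_of_le_one_right (classProb_nonneg hp s₁ a) (div_self_le_one _)
    _ = 1 := sum_classProb hsum s₁

lemma sum_mul_classProb_ratio_le_one (hp : ∀ ω, 0 ≤ p ω) (hsum : ∑ ω, p ω = 1)
    {s₁ s₂ t : Setoid Ω} (h₁ : s₁ ≤ t) (h₂ : s₂ ≤ t) :
    ∑ ω, p ω * (classProb p s₁ ⟦ω⟧ * classProb p s₂ ⟦ω⟧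
      / (classProb p (s₁ ⊓ s₂) ⟦ω⟧ * classProb p t ⟦ω⟧)) ≤ 1 := by
  calc _ = ∑ c, classProb p (s₁ ⊓ s₂) c * (classProb p s₁ (π₁ c) * classProb p s₂ (π₂ c)
          / (classProb p (s₁ ⊓ s₂) c * classProb p t (s₁.quotientMapOfLE h₁ (π₁ c)))) :=
        (sum_classProb_mul p (s₁ ⊓ s₂) _).symm
    _ ≤ ∑ c, classProb p s₁ (π₁ c) * classProb p s₂ (π₂ c)
          / classProb p t (s₁.quotientMapOfLE h₁ (π₁ c)) :=
        Finset.sum_le_sum fun c _ => (mul_div_assoc' _ _ _).trans_le <| mul_div_mul_left_le <|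
          div_nonneg (mul_nonneg (classProb_nonneg hp _ _) (classProb_nonneg hp _ _))
            (classProb_nonneg hp _ _)
    _ ≤ 1 := sum_classProb_mul_classProb_div_le_one hp hsum h₁ h₂

lemma entropy_add_entropy_sub_entropy_sub_entropy (hp : ∀ ω, 0 ≤ p ω)
    (s₁ s₂ s₃ s₄ : Setoid Ω) :
    entropy p s₁ + entropy p s₂ - entropy p s₃ - entropy p s₄
      = -∑ ω, p ω * log (classProb p s₁ ⟦ω⟧ * classProb p s₂ ⟦ω⟧
          / (classProb p s₃ ⟦ω⟧ * classProb p s₄ ⟦ω⟧)) := by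
  have hterm : ∀ ω, p ω * log (classProb p s₁ ⟦ω⟧ * classProb p s₂ ⟦ω⟧
      / (classProb p s₃ ⟦ω⟧ * classProb p s₄ ⟦ω⟧))
      = p ω * log (classProb p s₁ ⟦ω⟧) + p ω * log (classProb p s₂ ⟦ω⟧)
        - p ω * log (classProb p s₃ ⟦ω⟧) - p ω * log (classProb p s₄ ⟦ω⟧) := fun ω => by
    by_cases hω : p ω = 0
    · simp [hω]
    have h₁ := classProb_mk_pos hp s₁ hω
    have h₂ := classProb_mk_pos hp s₂ hω
    have h₃ := classProb_mk_pos hp s₃ hω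
    have h₄ := classProb_mk_pos hp s₄ hω
    rw [log_div (by positivity) (by positivity), log_mul h₁.ne' h₂.ne', log_mul h₃.ne' h₄.ne']
    ring
  simp only [entropy_eq_neg_sum, hterm, Finset.sum_sub_distrib, Finset.sum_add_distrib]
  ring

end ClassProb

/-- Gács–Körner: the entropy of the common information is at most the mutual
information. -/
theorem stmt_18 {Ω : Type*} [Fintype Ω] (p : Ω → ℝ) (hp : ∀ ω, 0 ≤ p ω)
    (hsum : ∑ ω, p ω = 1) (s₁ s₂ : Setoid Ω) :
    entropy p (s₁ ⊔ s₂) ≤ entropy p s₁ + entropy p s₂ - entropy p (s₁ ⊓ s₂) := by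
  have hgap := entropy_add_entropy_sub_entropy_sub_entropy hp s₁ s₂ (s₁ ⊓ s₂) (s₁ ⊔ s₂)
  have hgibbs := sum_mul_log_le_sum_mul_sub_sum hp fun ω hω =>
    div_pos (mul_pos (classProb_mk_pos hp s₁ hω) (classProb_mk_pos hp s₂ hω))
      (mul_pos (classProb_mk_pos hp (s₁ ⊓ s₂) hω) (classProb_mk_pos hp (s₁ ⊔ s₂) hω))
  have hratio := sum_mul_classProb_ratio_le_one hp hsum (t := s₁ ⊔ s₂) le_sup_left le_sup_right
  rw [hsum] at hgibbs
  linarith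
end
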